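/- arXiv:2604.04100 — 7 statements merged into one kernel-verified Lean document; each statement's English description precedes it below -/
import Mathlib

section
/- Let ξ0 ∈ ℝ with 0 < r_min < |ξ0| < r_max, and for k ≥ 1 set Λ(t)^k = e^{2kt}(ξ0² + (1 − ξ0²)e^{−2t})^{3k/2}. Then lim_{t→∞} Λ(t)^{−k} ∫₀ᵗ Λ(s)^k ds = 1/(2k). -/
/-!
Write `Λ(t)^k = e^{2kt} ρ(t)^k` with `ρ(t) = (ξ0² + (1 - ξ0²)e^{-2t})^{3/2} → |ξ0|³ ≠ 0`.
Averages of `ρ^k` against the weight `e^{2ks}` on `[0, t]` converge to the limit of `ρ^k`, as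
for Cesàro means, because the total weight `(e^{2kt} - 1)/(2k)` tends to infinity. Hence
`∫₀ᵗ Λ^k ∼ |ξ0|^{3k} e^{2kt}/(2k) ∼ Λ(t)^k/(2k)`.
-/

open Real Filter Topology MeasureTheory intervalIntegral Asymptotics

theorem Asymptotics.IsLittleO.intervalIntegral_atTop {E : Type*} [NormedAddCommGroup E]
    [NormedSpace ℝ E] {f : ℝ → E} {g : ℝ → ℝ} {a : ℝ} (hfg : f =o[atTop] g)
    (hf : ∀ t, IntervalIntegrable f volume a t) (hg : ∀ t, IntervalIntegrable g volume a t)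
    (hg0 : ∀ s, a ≤ s → 0 ≤ g s) (hgi : Tendsto (fun t => ∫ s in a..t, g s) atTop atTop) :
    (fun t => ∫ s in a..t, f s) =o[atTop] fun t => ∫ s in a..t, g s := by
  refine isLittleO_iff.2 fun ε hε => ?_
  obtain ⟨T₀, hT₀⟩ := eventually_atTop.1 (isLittleO_iff.1 hfg (half_pos hε))
  set T := max T₀ a
  have hhead : (fun _ => ∫ s in a..T, f s) =o[atTop] fun t => ∫ s in a..t, g s :=
    isLittleO_const_left.2 (Or.inr (tendsto_norm_atTop_atTop.comp hgi))
  filter_upwards [isLittleO_iff.1 hhead (half_pos hε), eventually_ge_atTop T] with t hhead_t hTt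
  have hgT : 0 ≤ ∫ s in a..T, g s := integral_nonneg (le_max_right _ _) fun s hs => hg0 s hs.1
  have htail : ‖∫ s in T..t, f s‖ ≤ ε / 2 * ∫ s in T..t, g s := by
    rw [← intervalIntegral.integral_const_mul]
    refine norm_integral_le_of_norm_le hTt (ae_of_all _ fun s hs => ?_)
      (((hg T).symm.trans (hg t)).const_mul _)
    have hs' : T ≤ s := hs.1.le
    simpa [abs_of_nonneg (hg0 s ((le_max_right _ _).trans hs'))] using
      hT₀ s ((le_max_left _ _).trans hs')
  have hsplit : ∫ s in a..t, g s = (∫ s in a..T, g s) + ∫ s in T..t, g s :=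
    (integral_add_adjacent_intervals (hg T) ((hg T).symm.trans (hg t))).symm
  calc ‖∫ s in a..t, f s‖ = ‖(∫ s in a..T, f s) + ∫ s in T..t, f s‖ := by
        rw [integral_add_adjacent_intervals (hf T) ((hf T).symm.trans (hf t))]
    _ ≤ ‖∫ s in a..T, f s‖ + ‖∫ s in T..t, f s‖ := norm_add_le _ _
    _ ≤ ε / 2 * ‖∫ s in a..t, g s‖ + ε / 2 * ∫ s in T..t, g s := add_le_add hhead_t htail
    _ ≤ ε * ‖∫ s in a..t, g s‖ := by
        have hgt : 0 ≤ ∫ s in T..t, g s :=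
          integral_nonneg hTt fun s hs => hg0 s ((le_max_right _ _).trans hs.1)
        rw [Real.norm_eq_abs, abs_of_nonneg (hsplit ▸ add_nonneg hgT hgt), hsplit]
        nlinarith

theorem tendsto_inv_intervalIntegral_mul_intervalIntegral {g h : ℝ → ℝ} {a L : ℝ}
    (hg : ∀ t, IntervalIntegrable g volume a t)
    (hgh : ∀ t, IntervalIntegrable (fun s => g s * h s) volume a t)
    (hg0 : ∀ s, a ≤ s → 0 ≤ g s) (hgi : Tendsto (fun t => ∫ s in a..t, g s) atTop atTop)
    (hh : Tendsto h atTop (𝓝 L)) :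
    Tendsto (fun t => (∫ s in a..t, g s)⁻¹ * ∫ s in a..t, g s * h s) atTop (𝓝 L) := by
  have hgL : ∀ t, IntervalIntegrable (fun s => g s * L) volume a t := fun t => (hg t).mul_const L
  have hdev : (fun s => g s * (h s - L)) =o[atTop] g := by
    simpa using (isBigO_refl g atTop).mul_isLittleO
      ((isLittleO_one_iff ℝ).2 (tendsto_sub_nhds_zero_iff.2 hh))
  have hdev_int : ∀ t, ∫ s in a..t, g s * (h s - L) =
      (∫ s in a..t, g s * h s) - L * ∫ s in a..t, g s := by
    intro t
    simp_rw [mul_sub]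
    rw [intervalIntegral.integral_sub (hgh t) (hgL t), intervalIntegral.integral_mul_const, mul_comm]
  have hdev_ii : ∀ t, IntervalIntegrable (fun s => g s * (h s - L)) volume a t := fun t => by
    simpa only [mul_sub] using (hgh t).sub (hgL t)
  have hsmall := (hdev.intervalIntegral_atTop hdev_ii hg hg0 hgi).tendsto_div_nhds_zero
  rw [← add_zero L]
  refine (hsmall.const_add L).congr' ?_
  filter_upwards [hgi.eventually_gt_atTop 0] with t ht
  rw [hdev_int]
  field_simp
  ring

theorem integral_exp_mul_real {c : ℝ} (hc : c ≠ 0) (a b : ℝ) :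
    ∫ s in a..b, exp (c * s) = (exp (c * b) - exp (c * a)) / c := by
  rw [intervalIntegral.integral_comp_mul_left (fun s => exp s) hc, integral_exp, smul_eq_mul,
    inv_mul_eq_div]

theorem tendsto_inv_exp_mul_intervalIntegral_exp_mul {c L : ℝ} {H : ℝ → ℝ} (hc : 0 < c)
    (hH : Continuous H) (hHL : Tendsto H atTop (𝓝 L)) (hL : L ≠ 0) :
    Tendsto (fun t => (exp (c * t) * H t)⁻¹ * ∫ s in (0:ℝ)..t, exp (c * s) * H s)
      atTop (𝓝 (1 / c)) := by
  have hexp : Continuous fun s => exp (c * s) := by fun_prop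
  have hweight : Tendsto (fun t => ∫ s in (0:ℝ)..t, exp (c * s)) atTop atTop := by
    simp_rw [integral_exp_mul_real hc.ne', mul_zero, exp_zero]
    exact ((tendsto_exp_atTop.comp (tendsto_id.const_mul_atTop hc)).atTop_add
      tendsto_const_nhds).atTop_div_const hc
  have hav := tendsto_inv_intervalIntegral_mul_intervalIntegral
    (fun t => hexp.intervalIntegrable 0 t) (fun t => (hexp.mul hH).intervalIntegrable 0 t)
    (fun s _ => (exp_pos _).le) hweight hHL
  have hratio : Tendsto (fun t => (∫ s in (0:ℝ)..t, exp (c * s)) / exp (c * t)) atTop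
      (𝓝 (1 / c)) := by
    have hdecay : Tendsto (fun t => exp (-(c * t))) atTop (𝓝 0) :=
      tendsto_exp_neg_atTop_nhds_zero.comp (tendsto_id.const_mul_atTop hc)
    have := (hdecay.const_sub 1).div_const c
    rw [sub_zero] at this
    refine this.congr fun t => ?_
    rw [integral_exp_mul_real hc.ne', mul_zero, exp_zero, exp_neg]
    field_simp
  have := (hav.mul hratio).mul (hHL.inv₀ hL)
  rw [mul_comm L, mul_assoc, mul_inv_cancel₀ hL, mul_one] at this
  refine this.congr' ?_
  filter_upwards [hweight.eventually_gt_atTop 0, hHL.eventually_ne hL] with t hpos hne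
  field_simp

theorem stmt4_general (ξ0 r_min : ℝ) (h0 : 0 < r_min) (h1 : r_min < |ξ0|)
    (Λ : ℝ → ℝ)
    (hΛ : ∀ t : ℝ, Λ t =
      Real.exp (2 * t) * (ξ0 ^ 2 + (1 - ξ0 ^ 2) * Real.exp (-2 * t)) ^ ((3:ℝ)/2))
    (k : ℕ) (hk : 1 ≤ k) :
    Filter.Tendsto (fun t : ℝ => (Λ t ^ k)⁻¹ * ∫ s in (0:ℝ)..t, Λ s ^ k)
      Filter.atTop (nhds (1 / (2 * k))) := by
  have hξ : ξ0 ≠ 0 := abs_pos.1 (h0.trans h1)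
  set ρ : ℝ → ℝ := fun t => (ξ0 ^ 2 + (1 - ξ0 ^ 2) * exp (-2 * t)) ^ ((3:ℝ)/2)
  have hρ_cont : Continuous ρ := .rpow_const (by fun_prop) fun _ => Or.inr (by norm_num)
  have hρ_lim : Tendsto ρ atTop (𝓝 ((ξ0 ^ 2) ^ ((3:ℝ)/2))) := by
    have hdecay : Tendsto (fun t : ℝ => exp (-2 * t)) atTop (𝓝 0) :=
      tendsto_exp_atBot.comp (tendsto_id.const_mul_atTop_of_neg (by norm_num))
    have hbase := (hdecay.const_mul (1 - ξ0 ^ 2)).const_add (ξ0 ^ 2)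
    rw [mul_zero, add_zero] at hbase
    exact (continuousAt_rpow_const _ _ (Or.inr (by norm_num))).tendsto.comp hbase
  have hΛk : ∀ t, Λ t ^ k = exp ((2 * k) * t) * ρ t ^ k := fun t => by
    rw [hΛ, mul_pow, ← exp_nat_mul, show (k : ℝ) * (2 * t) = 2 * k * t by ring]
  exact (tendsto_inv_exp_mul_intervalIntegral_exp_mul (mul_pos two_pos (Nat.cast_pos.2 hk))
    (hρ_cont.pow k) (hρ_lim.pow k) (pow_ne_zero k (rpow_pos_of_pos (by positivity) _).ne')).congr
    fun t => by simp only [hΛk, Pi.pow_apply]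

/-- limit of the weighted averages of powers of the integrating factor. -/
theorem stmt4 (ξ0 r_min r_max : ℝ) (h0 : 0 < r_min) (h1 : r_min < |ξ0|)
    (h2 : |ξ0| < r_max)
    (Λ : ℝ → ℝ)
    (hΛ : ∀ t : ℝ, Λ t =
      Real.exp (2 * t) * (ξ0 ^ 2 + (1 - ξ0 ^ 2) * Real.exp (-2 * t)) ^ ((3:ℝ)/2))
    (k : ℕ) (hk : 1 ≤ k) :
    Filter.Tendsto (fun t : ℝ => (Λ t ^ k)⁻¹ * ∫ s in (0:ℝ)..t, Λ s ^ k)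
      Filter.atTop (nhds (1 / (2 * k))) :=
  stmt4_general ξ0 r_min h0 h1 Λ hΛ k hk
end

section
/- Let ξ0 ∈ ℝ with 0 < r_min < |ξ0| < r_max, and let Λ(t) = e^{2t}(ξ0² + (1 − ξ0²)e^{−2t})^{3/2}. Then for every integer i ≥ 1 there exists a constant C(i) > 0 (depending only on i, r_min, r_max) such that for all t ≥ 0: |Λ(t)^{−i} ∫₀ᵗ Λ(s)^i ds − 1/(2i)| ≤ C(i) e^{−t}. -/
/-! With `a = ξ0²` one has `Λ(s)^i = e^{2is} g(s)^{3i/2}` for the profile `g = expBlend a`,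
`g(s) = a + (1 - a) e^{-2s}`, which for `s ≥ 0` stays between `min a 1 > 0` and `max a 1` and has
`|g'(s)| = O(e^{-2s})`. Integrating `e^{ls} h(s)` by parts (`h = g^{3i/2}`, `l = 2i`) gives
`(e^{lt} h(t) - h(0))/l` up to `l⁻¹ ∫₀ᵗ e^{ls} h'(s) ds = O(t e^{(l-2)t}) = O(e^{(l-1)t})`;
dividing by `Λ(t)^i ≥ min(a,1)^{3i/2} e^{lt}` leaves an error `O(e^{-t})`. -/

open Real Set MeasureTheory

theorem integral_exp_mul_eq {h h' : ℝ → ℝ} {l a b : ℝ} (hl : l ≠ 0)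
    (hh : ∀ s ∈ uIcc a b, HasDerivAt h (h' s) s) (hh' : IntervalIntegrable h' volume a b) :
    ∫ s in a..b, exp (l * s) * h s =
      (exp (l * b) * h b - exp (l * a) * h a - ∫ s in a..b, exp (l * s) * h' s) / l := by
  have hexp : ∀ s ∈ uIcc a b, HasDerivAt (fun s => exp (l * s) / l) (exp (l * s)) s := by
    intro s _
    have := (((hasDerivAt_id s).const_mul l).exp).div_const l
    rwa [mul_one, mul_div_cancel_right₀ _ hl] at this
  have hparts := intervalIntegral.integral_mul_deriv_eq_deriv_mul hh hexp hh'
    ((by fun_prop : Continuous fun s => exp (l * s)).intervalIntegrable a b)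
  simp only [mul_comm (exp _)] at hparts ⊢
  simp only [hparts, ← mul_div_assoc, intervalIntegral.integral_div]
  ring

theorem abs_integral_exp_mul_le {f : ℝ → ℝ} {l M t : ℝ} (hl : 2 ≤ l) (ht : 0 ≤ t)
    (hf : ∀ s ∈ Icc 0 t, |f s| ≤ M * exp (-2 * s)) :
    |∫ s in (0)..t, exp (l * s) * f s| ≤ M * exp ((l - 1) * t) := by
  have hM : 0 ≤ M :=
    nonneg_of_mul_nonneg_left ((abs_nonneg _).trans (hf t ⟨ht, le_rfl⟩)) (exp_pos _)
  have hpt : ∀ s ∈ uIoc 0 t, ‖exp (l * s) * f s‖ ≤ M * exp ((l - 2) * t) := by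
    intro s hs
    rw [uIoc_of_le ht] at hs
    calc ‖exp (l * s) * f s‖ = exp (l * s) * |f s| := by
          rw [norm_mul, norm_of_nonneg (exp_pos _).le, norm_eq_abs]
      _ ≤ exp (l * s) * (M * exp (-2 * s)) := by gcongr; exact hf s (Ioc_subset_Icc_self hs)
      _ = M * exp ((l - 2) * s) := by rw [mul_left_comm, ← exp_add]; ring_nf
      _ ≤ M * exp ((l - 2) * t) := by gcongr; linarith [hs.2]
  calc |∫ s in (0)..t, exp (l * s) * f s|
      ≤ M * exp ((l - 2) * t) * |t - 0| := intervalIntegral.norm_integral_le_of_norm_le_const hpt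
    _ ≤ M * exp ((l - 2) * t) * exp t := by
        rw [sub_zero, abs_of_nonneg ht]; gcongr; linarith [add_one_le_exp t]
    _ = M * exp ((l - 1) * t) := by rw [mul_assoc, ← exp_add]; ring_nf

theorem abs_inv_mul_integral_exp_mul_sub_le {h h' : ℝ → ℝ} {l m M t : ℝ} (hl : 2 ≤ l)
    (hm : 0 < m) (ht : 0 ≤ t) (hh : ∀ s ∈ Icc 0 t, HasDerivAt h (h' s) s)
    (hh' : ContinuousOn h' (Icc 0 t)) (hmt : m ≤ h t)
    (hM : ∀ s ∈ Icc 0 t, |h' s| ≤ M * exp (-2 * s)) :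
    |(exp (l * t) * h t)⁻¹ * (∫ s in (0)..t, exp (l * s) * h s) - 1 / l| ≤
      (|h 0| + M) / (m * l) * exp (-t) := by
  have hl0 : 0 < l := by linarith
  have hht : 0 < h t := hm.trans_le hmt
  have hM0 : 0 ≤ M :=
    nonneg_of_mul_nonneg_left ((abs_nonneg _).trans (hM t ⟨ht, le_rfl⟩)) (exp_pos _)
  set J := ∫ s in (0)..t, exp (l * s) * h' s
  have hJ : |J| ≤ M * exp ((l - 1) * t) := abs_integral_exp_mul_le hl ht hM
  have hparts := integral_exp_mul_eq hl0.ne' (by rwa [uIcc_of_le ht])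
    (hh'.intervalIntegrable_of_Icc ht)
  rw [hparts, mul_zero, exp_zero, one_mul]
  have hdiff : (exp (l * t) * h t)⁻¹ * ((exp (l * t) * h t - h 0 - J) / l) - 1 / l =
      -((h 0 + J) / (l * exp (l * t) * h t)) := by
    field_simp
    ring
  have hdecay : exp (-(l * t)) ≤ exp (-t) := exp_le_exp.mpr (by nlinarith)
  rw [hdiff, abs_neg, abs_div, abs_of_pos (by positivity : 0 < l * exp (l * t) * h t)]
  calc |h 0 + J| / (l * exp (l * t) * h t)
      ≤ (|h 0| + M * exp ((l - 1) * t)) / (l * exp (l * t) * m) := by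
        gcongr
        exact (abs_add_le _ _).trans (by gcongr)
    _ = (|h 0| * exp (-(l * t)) + M * exp (-t)) / (m * l) := by
        rw [exp_neg, show -t = (l - 1) * t - l * t by ring, exp_sub]
        field_simp
    _ ≤ (|h 0| + M) / (m * l) * exp (-t) := by
        rw [div_mul_eq_mul_div, add_mul]
        gcongr

noncomputable def expBlend (a s : ℝ) : ℝ := a + (1 - a) * exp (-2 * s)

theorem expBlend_zero (a : ℝ) : expBlend a 0 = 1 := by simp [expBlend]

theorem hasDerivAt_expBlend (a s : ℝ) :
    HasDerivAt (expBlend a) (-2 * (1 - a) * exp (-2 * s)) s := by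
  have := (((hasDerivAt_id s).const_mul (-2)).exp.const_mul (1 - a)).const_add a
  exact this.congr_deriv (by simp only [id, mul_one]; ring)

theorem continuous_expBlend (a : ℝ) : Continuous (expBlend a) := by
  unfold expBlend; fun_prop

theorem min_le_expBlend {a s : ℝ} (hs : 0 ≤ s) : min a 1 ≤ expBlend a s := by
  have hu : exp (-2 * s) ≤ 1 := exp_le_one_iff.mpr (by linarith)
  have hu0 := exp_pos (-2 * s)
  unfold expBlend
  rcases le_total a 1 with h | h
  · rw [min_eq_left h]; nlinarith
  · rw [min_eq_right h]; nlinarith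

theorem expBlend_le_max {a s : ℝ} (hs : 0 ≤ s) : expBlend a s ≤ max a 1 := by
  have hu : exp (-2 * s) ≤ 1 := exp_le_one_iff.mpr (by linarith)
  have hu0 := exp_pos (-2 * s)
  unfold expBlend
  rcases le_total a 1 with h | h
  · rw [max_eq_right h]; nlinarith
  · rw [max_eq_left h]; nlinarith

theorem hasDerivAt_expBlend_rpow (a s : ℝ) {p : ℝ} (hp : 1 ≤ p) :
    HasDerivAt (fun s => expBlend a s ^ p)
      (-2 * (1 - a) * exp (-2 * s) * p * expBlend a s ^ (p - 1)) s :=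
  (hasDerivAt_expBlend a s).rpow_const (Or.inr hp)

theorem continuous_deriv_expBlend_rpow (a : ℝ) {p : ℝ} (hp : 1 ≤ p) :
    Continuous fun s => -2 * (1 - a) * exp (-2 * s) * p * expBlend a s ^ (p - 1) := by
  have := (continuous_rpow_const (q := p - 1) (by linarith)).comp (continuous_expBlend a)
  fun_prop

theorem abs_deriv_expBlend_rpow_le {a p s : ℝ} (ha : 0 ≤ a) (hp : 1 ≤ p) (hs : 0 ≤ s) :
    |-2 * (1 - a) * exp (-2 * s) * p * expBlend a s ^ (p - 1)| ≤
      2 * |1 - a| * p * max a 1 ^ (p - 1) * exp (-2 * s) := by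
  have hg : 0 ≤ expBlend a s := (le_min ha zero_le_one).trans (min_le_expBlend hs)
  rw [abs_mul, abs_mul, abs_mul, abs_mul, abs_neg, abs_two, abs_of_nonneg (rpow_nonneg hg _),
    abs_of_pos (exp_pos _), abs_of_pos (by linarith : (0:ℝ) < p)]
  calc 2 * |1 - a| * exp (-2 * s) * p * expBlend a s ^ (p - 1)
      ≤ 2 * |1 - a| * exp (-2 * s) * p * max a 1 ^ (p - 1) := by
        gcongr
        exact expBlend_le_max hs
    _ = _ := by ring

theorem abs_inv_mul_integral_exp_mul_expBlend_rpow_sub_le {a p l t : ℝ} (ha : 0 < a)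
    (hp : 1 ≤ p) (hl : 2 ≤ l) (ht : 0 ≤ t) :
    |(exp (l * t) * expBlend a t ^ p)⁻¹ * (∫ s in (0)..t, exp (l * s) * expBlend a s ^ p) - 1 / l|
      ≤ (1 + 2 * |1 - a| * p * max a 1 ^ (p - 1)) / (min a 1 ^ p * l) * exp (-t) := by
  have h := abs_inv_mul_integral_exp_mul_sub_le hl (m := min a 1 ^ p) (by positivity) ht
    (fun s _ => hasDerivAt_expBlend_rpow a s hp)
    (continuous_deriv_expBlend_rpow a hp).continuousOn
    (rpow_le_rpow (by positivity) (min_le_expBlend ht) (by linarith))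
    (fun s hs => abs_deriv_expBlend_rpow_le ha.le hp hs.1)
  rwa [expBlend_zero, one_rpow, abs_one] at h

theorem stmt5_general (ξ0 r_min : ℝ) (h0 : 0 < r_min) (h1 : r_min < |ξ0|)
    (Λ : ℝ → ℝ)
    (hΛ : ∀ t : ℝ, Λ t =
      Real.exp (2 * t) * (ξ0 ^ 2 + (1 - ξ0 ^ 2) * Real.exp (-2 * t)) ^ ((3:ℝ)/2)) :
    ∀ i : ℕ, 1 ≤ i → ∃ C : ℝ, 0 < C ∧ ∀ t : ℝ, 0 ≤ t →
      |(Λ t ^ i)⁻¹ * (∫ s in (0:ℝ)..t, Λ s ^ i) - 1 / (2 * i)| ≤ C * Real.exp (-t) := by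
  intro i hi
  have hξ0 : ξ0 ≠ 0 := abs_pos.mp (h0.trans h1)
  have ha : 0 < ξ0 ^ 2 := by positivity
  have hi' : (1 : ℝ) ≤ i := by exact_mod_cast hi
  have hΛ_pow : ∀ s, 0 ≤ s →
      Λ s ^ i = exp (2 * i * s) * expBlend (ξ0 ^ 2) s ^ (3 * i / 2 : ℝ) := by
    intro s hs
    have hg := (le_min ha.le zero_le_one).trans (min_le_expBlend (a := ξ0 ^ 2) hs)
    unfold expBlend at hg ⊢
    rw [hΛ, mul_pow, ← exp_nat_mul, ← rpow_natCast, ← rpow_mul hg]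
    ring_nf
  refine ⟨?C, ?pos, fun t ht => ?bound⟩
  case bound =>
    rw [hΛ_pow t ht, intervalIntegral.integral_congr fun s hs => hΛ_pow s (uIcc_of_le ht ▸ hs).1]
    exact abs_inv_mul_integral_exp_mul_expBlend_rpow_sub_le (p := 3 * i / 2) (l := 2 * i) ha
      (by linarith) (by linarith) ht
  case pos => positivity

/-- exponential rate of convergence of the weighted averages. -/
theorem stmt5 (ξ0 r_min r_max : ℝ) (h0 : 0 < r_min) (h1 : r_min < |ξ0|)
    (h2 : |ξ0| < r_max)
    (Λ : ℝ → ℝ)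
    (hΛ : ∀ t : ℝ, Λ t =
      Real.exp (2 * t) * (ξ0 ^ 2 + (1 - ξ0 ^ 2) * Real.exp (-2 * t)) ^ ((3:ℝ)/2)) :
    ∀ i : ℕ, 1 ≤ i → ∃ C : ℝ, 0 < C ∧ ∀ t : ℝ, 0 ≤ t →
      |(Λ t ^ i)⁻¹ * (∫ s in (0:ℝ)..t, Λ s ^ i) - 1 / (2 * i)| ≤ C * Real.exp (-t) :=
  stmt5_general ξ0 r_min h0 h1 Λ hΛ
end

section
/- Let ξ0 ∈ ℝ with 0 < r_min < |ξ0| < r_max, and let Λ(t) = e^{2t}(ξ0² + (1 − ξ0²)e^{−2t})^{3/2}. Then for every integer i ≥ 1 there exists a constant C(i) > 0 such that for all t ≥ 0: Λ(t)^{−i} ∫₀ᵗ Λ(s)^i e^{−s} ds ≤ C(i) e^{−t}. -/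
/-!
For `s ≥ 0` the base `ξ0² + (1 - ξ0²) e^{-2s}` is a convex combination of `ξ0²` and `1`, so
`Λ s` is squeezed between two multiples of `e^{2s}`. Hence
`∫₀ᵗ Λ^i e^{-s} ≲ ∫₀ᵗ e^{(2i-1)s} ≲ e^{(2i-1)t}`, and dividing by `Λ t ^ i ≳ e^{2it}` leaves `e^{-t}`.
-/

open Real Set intervalIntegral

theorem integral_exp_mul_le {c : ℝ} (hc : 0 < c) (t : ℝ) :
    ∫ s in (0:ℝ)..t, exp (c * s) ≤ exp (c * t) / c := by
  rw [integral_comp_mul_left (fun s => exp s) hc.ne', integral_exp, mul_zero, exp_zero,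
    smul_eq_mul, inv_mul_eq_div]
  gcongr
  linarith

theorem integral_pow_mul_exp_neg_le {f : ℝ → ℝ} {M a b t : ℝ} {i : ℕ} (hf : Continuous f)
    (hf0 : ∀ s, 0 ≤ s → 0 ≤ f s) (hfM : ∀ s, 0 ≤ s → f s ≤ M * exp (a * s))
    (hab : b < i * a) (ht : 0 ≤ t) :
    ∫ s in (0:ℝ)..t, f s ^ i * exp (-(b * s)) ≤ M ^ i * (exp ((i * a - b) * t) / (i * a - b)) := by
  have hM : 0 ≤ M := nonneg_of_mul_nonneg_left ((hf0 0 le_rfl).trans (hfM 0 le_rfl)) (exp_pos _)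
  calc ∫ s in (0:ℝ)..t, f s ^ i * exp (-(b * s))
      ≤ ∫ s in (0:ℝ)..t, M ^ i * exp ((i * a - b) * s) := by
        refine integral_mono_on ht ((by fun_prop : Continuous _).intervalIntegrable _ _)
          ((by fun_prop : Continuous _).intervalIntegrable _ _) fun s hs => ?_
        calc f s ^ i * exp (-(b * s)) ≤ (M * exp (a * s)) ^ i * exp (-(b * s)) := by
              gcongr
              exacts [hf0 s hs.1, hfM s hs.1]
          _ = M ^ i * exp ((i * a - b) * s) := by
              rw [mul_pow, ← exp_nat_mul, mul_assoc, ← exp_add]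
              ring_nf
    _ ≤ M ^ i * (exp ((i * a - b) * t) / (i * a - b)) := by
        rw [integral_const_mul]
        gcongr
        exact integral_exp_mul_le (by linarith) t

theorem inv_pow_mul_integral_le {f : ℝ → ℝ} {m M a b t : ℝ} {i : ℕ} (hf : Continuous f)
    (hm : 0 < m) (hfm : ∀ s, 0 ≤ s → m * exp (a * s) ≤ f s)
    (hfM : ∀ s, 0 ≤ s → f s ≤ M * exp (a * s)) (hab : b < i * a) (ht : 0 ≤ t) :
    (f t ^ i)⁻¹ * ∫ s in (0:ℝ)..t, f s ^ i * exp (-(b * s)) ≤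
      (M / m) ^ i / (i * a - b) * exp (-(b * t)) := by
  have hf0 : ∀ s, 0 ≤ s → 0 ≤ f s := fun s hs =>
    (by positivity : 0 ≤ m * exp (a * s)).trans (hfm s hs)
  have hc : 0 < i * a - b := by linarith
  have hM : 0 ≤ M := nonneg_of_mul_nonneg_left ((hf0 0 le_rfl).trans (hfM 0 le_rfl)) (exp_pos _)
  have hft : 0 ≤ f t := hf0 t ht
  calc (f t ^ i)⁻¹ * ∫ s in (0:ℝ)..t, f s ^ i * exp (-(b * s))
      ≤ (f t ^ i)⁻¹ * (M ^ i * (exp ((i * a - b) * t) / (i * a - b))) := by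
        gcongr
        exact integral_pow_mul_exp_neg_le hf hf0 hfM hab ht
    _ ≤ ((m * exp (a * t)) ^ i)⁻¹ * (M ^ i * (exp ((i * a - b) * t) / (i * a - b))) := by
        gcongr
        exact hfm t ht
    _ = (M / m) ^ i / (i * a - b) * exp (-(b * t)) := by
        rw [show (i * a - b) * t = i * (a * t) + -(b * t) by ring, exp_add, mul_pow, ← exp_nat_mul,
          div_pow]
        field_simp

theorem rpow_add_one_sub_mul_mem_Icc {x p u : ℝ} (hx : 0 < x) (hp : 0 ≤ p) (hu : u ∈ Icc 0 1) :
    (x + (1 - x) * u) ^ p ∈ Icc (min x 1 ^ p) (max x 1 ^ p) := by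
  have hmem : x + (1 - x) * u ∈ uIcc x 1 := by
    simpa only [smul_eq_mul, mul_comm u] using
      (convex_uIcc x 1).add_smul_sub_mem left_mem_uIcc right_mem_uIcc hu
  have hpos : 0 < min x 1 := lt_min hx one_pos
  exact ⟨rpow_le_rpow hpos.le hmem.1 hp, rpow_le_rpow (hpos.le.trans hmem.1) hmem.2 hp⟩

theorem stmt6_general (ξ0 r_min : ℝ) (h0 : 0 < r_min) (h1 : r_min < |ξ0|)
    (Λ : ℝ → ℝ)
    (hΛ : ∀ t : ℝ, Λ t =
      Real.exp (2 * t) * (ξ0 ^ 2 + (1 - ξ0 ^ 2) * Real.exp (-2 * t)) ^ ((3:ℝ)/2)) :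
    ∀ i : ℕ, 1 ≤ i → ∃ C : ℝ, 0 < C ∧ ∀ t : ℝ, 0 ≤ t →
      (Λ t ^ i)⁻¹ * (∫ s in (0:ℝ)..t, Λ s ^ i * Real.exp (-s)) ≤ C * Real.exp (-t) := by
  intro i hi
  have hξ : 0 < ξ0 ^ 2 := by
    have : ξ0 ≠ 0 := abs_pos.mp (h0.trans h1)
    positivity
  set m := min (ξ0 ^ 2) 1 ^ ((3:ℝ)/2)
  set M := max (ξ0 ^ 2) 1 ^ ((3:ℝ)/2)
  have hΛ_mem : ∀ s, 0 ≤ s → Λ s ∈ Icc (m * exp (2 * s)) (M * exp (2 * s)) := fun s hs => by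
    have hu : exp (-2 * s) ∈ Icc 0 1 := ⟨(exp_pos _).le, exp_le_one_iff.mpr (by linarith)⟩
    obtain ⟨hm, hM⟩ := rpow_add_one_sub_mul_mem_Icc hξ (by norm_num : (0:ℝ) ≤ 3 / 2) hu
    rw [hΛ s, mul_comm m, mul_comm M]
    exact ⟨by gcongr, by gcongr⟩
  have hΛ_cont : Continuous Λ := by
    rw [funext hΛ]
    exact (by fun_prop : Continuous _).mul
      ((by fun_prop : Continuous _).rpow_const fun _ => Or.inr (by norm_num))
  have hia : (1:ℝ) < i * 2 := by
    have : (1:ℝ) ≤ i := by exact_mod_cast hi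
    linarith
  refine ⟨(M / m) ^ i / (i * 2 - 1), div_pos (by positivity) (by linarith), fun t ht => ?_⟩
  simpa only [one_mul] using
    inv_pow_mul_integral_le hΛ_cont (by positivity) (fun s hs => (hΛ_mem s hs).1)
      (fun s hs => (hΛ_mem s hs).2) hia ht

/-- exponentially weighted kernel estimate for the integrating factor. -/
theorem stmt6 (ξ0 r_min r_max : ℝ) (h0 : 0 < r_min) (h1 : r_min < |ξ0|)
    (h2 : |ξ0| < r_max)
    (Λ : ℝ → ℝ)
    (hΛ : ∀ t : ℝ, Λ t =
      Real.exp (2 * t) * (ξ0 ^ 2 + (1 - ξ0 ^ 2) * Real.exp (-2 * t)) ^ ((3:ℝ)/2)) :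
    ∀ i : ℕ, 1 ≤ i → ∃ C : ℝ, 0 < C ∧ ∀ t : ℝ, 0 ≤ t →
      (Λ t ^ i)⁻¹ * (∫ s in (0:ℝ)..t, Λ s ^ i * Real.exp (-s)) ≤ C * Real.exp (-t) :=
  stmt6_general ξ0 r_min h0 h1 Λ hΛ
end

section
/- Define real numbers c_{m,i} for integers m, i by the recursion c_{m,i} = ((i−1)/2) c_{m−2,i−2} − (3/2) c_{m,i+1} − (1/2) c_{m,i+2}, with initial values c_{0,0} = 1, c_{1,1} = 0, c_{2,2} = 1/2, and c_{k,j} = 0 whenever (k,j) ∉ {(0,0)} ∪ {(k,j) : k ≥ 1, 1 ≤ j ≤ k}. Then for every odd m ≥ 1 and every i with 1 ≤ i ≤ m, c_{m,i} = 0. -/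
/-- the recursively defined coefficients c_{m,i} vanish for odd m. -/
theorem stmt7 (c : ℤ → ℤ → ℝ)
    (h00 : c 0 0 = 1) (h11 : c 1 1 = 0) (h22 : c 2 2 = 1/2)
    (hzero : ∀ k j : ℤ, ¬((k = 0 ∧ j = 0) ∨ (1 ≤ k ∧ 1 ≤ j ∧ j ≤ k)) → c k j = 0)
    (hrec : ∀ m i : ℤ, 1 ≤ m → 1 ≤ i → i ≤ m →
      c m i = ((i : ℝ) - 1) / 2 * c (m - 2) (i - 2)
        - 3 / 2 * c m (i + 1) - 1 / 2 * c m (i + 2)) :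
    ∀ m i : ℤ, Odd m → 1 ≤ i → i ≤ m → c m i = 0 := by
  -- inner downward induction, given vanishing of the previous odd row
  have inner : ∀ m : ℤ, 1 ≤ m → (∀ j : ℤ, c (m - 2) j = 0) →
      ∀ k : ℕ, ∀ i : ℤ, 1 ≤ i → m - i ≤ (k : ℤ) → c m i = 0 := by
    intro m hm prev k
    induction k with
    | zero =>
      intro i hi hki
      rcases lt_or_ge m i with h | h
      · exact hzero m i (by omega)
      · have him : i = m := by omega
        rw [hrec m i hm hi (by omega), prev, hzero m (i + 1) (by omega),
          hzero m (i + 2) (by omega)]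
        ring
    | succ k ih =>
      intro i hi hki
      rcases lt_or_ge m i with h | h
      · exact hzero m i (by omega)
      · rw [hrec m i hm hi h, prev, ih (i + 1) (by omega) (by omega),
          ih (i + 2) (by omega) (by omega)]
        ring
  have main : ∀ n : ℕ, ∀ i : ℤ, 1 ≤ i → c (2 * (n : ℤ) + 1) i = 0 := by
    intro n
    induction n with
    | zero =>
      intro i hi
      refine inner 1 le_rfl (fun j => hzero _ j (by omega)) (1 - i).toNat i hi (by omega)
    | succ n ih =>
      intro i hi
      set m : ℤ := 2 * ((n : ℤ) + 1) + 1 with hm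
      have prev : ∀ j : ℤ, c (m - 2) j = 0 := by
        intro j
        rcases le_or_gt 1 j with hj | hj
        · have : m - 2 = 2 * (n : ℤ) + 1 := by omega
          rw [this]; exact ih j hj
        · exact hzero _ j (by omega)
      have := inner m (by omega) prev (m - i).toNat i hi (by omega)
      push_cast at this ⊢
      linarith [this]
  intro m i hm h1 h2
  obtain ⟨t, ht⟩ := hm
  have ht0 : 0 ≤ t := by omega
  obtain ⟨n, rfl⟩ := Int.eq_ofNat_of_zero_le ht0
  have := main n i h1
  rw [ht]
  convert this using 2
end

section
/- Let V(x) = x⁴/4 − x²/2 and Z_ε = ∫_ℝ e^{−V(x)/ε} dx. Then there exist constants 0 < c ≤ C and ε₀ > 0 such that for all 0 < ε < ε₀: c √ε e^{1/(4ε)} ≤ Z_ε ≤ C √ε e^{1/(4ε)}. -/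
/-!
Completing the square, `-V x / ε = 1 / (4 ε) - (x ^ 2 - 1) ^ 2 / (4 ε)`, so
`Z_ε = e^{1/(4ε)} ∫ exp (-b (x² - 1)²)` with `b = 1 / (4 ε)`. Since `|x² - 1| ≥ |x ∓ 1|`
on `±x ≥ 0`, the remaining integral is at most the sum of two Gaussian integrals, `2 √(π / b)`.
On `[1, 1 + √ε]` one has `b (x² - 1)² ≤ 9 / 4`, which gives the lower bound `e^{-9/4} √ε`.
-/

open Real MeasureTheory

section DoubleWell

variable {b : ℝ}

lemma exp_neg_doubleWell_div {ε : ℝ} (hε : ε ≠ 0) (x : ℝ) :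
    exp (-(x ^ 4 / 4 - x ^ 2 / 2) / ε) =
      exp (1 / (4 * ε)) * exp (-(1 / (4 * ε)) * (x ^ 2 - 1) ^ 2) := by
  rw [← exp_add]
  congr 1
  field_simp
  ring

lemma integral_exp_neg_mul_sq_sub (a : ℝ) : ∫ x, exp (-b * (x - a) ^ 2) = √(π / b) :=
  (integral_sub_right_eq_self (fun x => exp (-b * x ^ 2)) a).trans (integral_gaussian b)

lemma integrable_exp_neg_mul_sq_sub (hb : 0 < b) (a : ℝ) :
    Integrable fun x => exp (-b * (x - a) ^ 2) :=
  (integrable_exp_neg_mul_sq hb).comp_sub_right a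

lemma exp_neg_mul_sq_sub_one_sq_le (hb : 0 ≤ b) (x : ℝ) :
    exp (-b * (x ^ 2 - 1) ^ 2) ≤ exp (-b * (x - 1) ^ 2) + exp (-b * (x - -1) ^ 2) := by
  rcases le_total 0 x with hx | hx
  · have : (x - 1) ^ 2 ≤ (x ^ 2 - 1) ^ 2 := by nlinarith [sq_nonneg (x - 1)]
    linarith [exp_le_exp.mpr (by nlinarith : -b * (x ^ 2 - 1) ^ 2 ≤ -b * (x - 1) ^ 2),
      exp_pos (-b * (x - -1) ^ 2)]
  · have : (x + 1) ^ 2 ≤ (x ^ 2 - 1) ^ 2 := by nlinarith [sq_nonneg (x + 1)]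
    linarith [exp_le_exp.mpr (by nlinarith : -b * (x ^ 2 - 1) ^ 2 ≤ -b * (x - -1) ^ 2),
      exp_pos (-b * (x - 1) ^ 2)]

lemma integrable_exp_neg_mul_sq_sub_one_sq (hb : 0 < b) :
    Integrable fun x => exp (-b * (x ^ 2 - 1) ^ 2) := by
  refine ((integrable_exp_neg_mul_sq_sub hb 1).add (integrable_exp_neg_mul_sq_sub hb (-1))).mono
    (by fun_prop) (Filter.Eventually.of_forall fun x => ?_)
  rw [Pi.add_apply, norm_of_nonneg (exp_pos _).le,
    norm_of_nonneg (add_pos (exp_pos _) (exp_pos _)).le]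
  exact exp_neg_mul_sq_sub_one_sq_le hb.le x

lemma integral_exp_neg_mul_sq_sub_one_sq_le (hb : 0 < b) :
    ∫ x, exp (-b * (x ^ 2 - 1) ^ 2) ≤ 2 * √(π / b) := by
  have hg₁ := integrable_exp_neg_mul_sq_sub hb 1
  have hg₂ := integrable_exp_neg_mul_sq_sub hb (-1)
  calc ∫ x, exp (-b * (x ^ 2 - 1) ^ 2)
      ≤ ∫ x, (exp (-b * (x - 1) ^ 2) + exp (-b * (x - -1) ^ 2)) :=
        integral_mono (integrable_exp_neg_mul_sq_sub_one_sq hb) (hg₁.add hg₂)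
          (exp_neg_mul_sq_sub_one_sq_le hb.le)
    _ = 2 * √(π / b) := by
        rw [integral_add hg₁ hg₂, integral_exp_neg_mul_sq_sub, integral_exp_neg_mul_sq_sub]
        ring

lemma mul_exp_le_integral_exp_neg_mul_sq_sub_one_sq (hb : 0 < b) {δ : ℝ} (hδ : 0 ≤ δ) :
    δ * exp (-b * (δ * (2 + δ)) ^ 2) ≤ ∫ x, exp (-b * (x ^ 2 - 1) ^ 2) := by
  have hf := integrable_exp_neg_mul_sq_sub_one_sq hb
  have hbound : ∀ x ∈ Set.Icc 1 (1 + δ),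
      exp (-b * (δ * (2 + δ)) ^ 2) ≤ exp (-b * (x ^ 2 - 1) ^ 2) := by
    rintro x ⟨hx₁, hx₂⟩
    have : (x ^ 2 - 1) ^ 2 ≤ (δ * (2 + δ)) ^ 2 := by
      rw [show x ^ 2 - 1 = (x - 1) * (x + 1) by ring]
      exact pow_le_pow_left₀ (by nlinarith) (by nlinarith) 2
    exact exp_le_exp.mpr (by nlinarith)
  calc δ * exp (-b * (δ * (2 + δ)) ^ 2)
      ≤ ∫ x in Set.Icc 1 (1 + δ), exp (-b * (x ^ 2 - 1) ^ 2) := by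
        have := setIntegral_ge_of_const_le_real measurableSet_Icc
          (by simp [Real.volume_Icc]) hbound hf.integrableOn
        rwa [Measure.real, Real.volume_Icc, add_sub_cancel_left,
          ENNReal.toReal_ofReal hδ, mul_comm] at this
    _ ≤ ∫ x, exp (-b * (x ^ 2 - 1) ^ 2) :=
        setIntegral_le_integral hf (Filter.Eventually.of_forall fun _ => (exp_pos _).le)

end DoubleWell

lemma sqrt_pi_div_one_div_four_mul (ε : ℝ) : √(π / (1 / (4 * ε))) = 2 * √π * √ε := by
  rw [div_div_eq_mul_div, div_one, show π * (4 * ε) = 2 ^ 2 * π * ε by ring,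
    sqrt_mul (by positivity), sqrt_mul (by positivity), sqrt_sq zero_le_two]

lemma neg_nine_div_four_le_neg_one_div_four_mul_mul {ε : ℝ} (hε : 0 < ε) (hε₁ : ε ≤ 1) :
    -(9 / 4) ≤ -(1 / (4 * ε)) * (√ε * (2 + √ε)) ^ 2 := by
  rw [mul_pow, sq_sqrt hε.le, ← mul_assoc, neg_mul, one_div_mul_eq_div,
    div_mul_cancel_right₀ (by positivity)]
  nlinarith [sqrt_nonneg ε, sqrt_le_one.mpr hε₁]

/-- Laplace asymptotics for the partition function Z_ε. -/
theorem stmt14 (V : ℝ → ℝ) (hV : ∀ x : ℝ, V x = x ^ 4 / 4 - x ^ 2 / 2) :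
    ∃ c C ε₀ : ℝ, 0 < c ∧ c ≤ C ∧ 0 < ε₀ ∧ ∀ ε : ℝ, 0 < ε → ε < ε₀ →
      c * Real.sqrt ε * Real.exp (1 / (4 * ε)) ≤ (∫ x : ℝ, Real.exp (-(V x) / ε)) ∧
      (∫ x : ℝ, Real.exp (-(V x) / ε)) ≤ C * Real.sqrt ε * Real.exp (1 / (4 * ε)) := by
  refine ⟨exp (-(9 / 4)), 4 * √π, 1, exp_pos _, ?_, one_pos, fun ε hε hε₁ => ?_⟩
  · have : 1 ≤ √π := one_le_sqrt.mpr (by linarith [pi_gt_three])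
    linarith [exp_le_one_iff.mpr (by norm_num : -(9 / 4 : ℝ) ≤ 0)]
  have hb : 0 < 1 / (4 * ε) := by positivity
  have hZ : ∫ x, exp (-(V x) / ε) =
      exp (1 / (4 * ε)) * ∫ x, exp (-(1 / (4 * ε)) * (x ^ 2 - 1) ^ 2) := by
    simp_rw [hV, exp_neg_doubleWell_div hε.ne', integral_const_mul]
  have hlow := mul_exp_le_integral_exp_neg_mul_sq_sub_one_sq hb (sqrt_nonneg ε)
  have hup := integral_exp_neg_mul_sq_sub_one_sq_le hb
  rw [sqrt_pi_div_one_div_four_mul] at hup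
  have hexponent := neg_nine_div_four_le_neg_one_div_four_mul_mul hε hε₁.le
  rw [hZ]
  constructor
  · calc exp (-(9 / 4)) * √ε * exp (1 / (4 * ε))
        ≤ exp (1 / (4 * ε)) * (√ε * exp (-(1 / (4 * ε)) * (√ε * (2 + √ε)) ^ 2)) := by
          rw [mul_comm, mul_comm (exp _) (√ε)]
          gcongr
      _ ≤ _ := by gcongr
  · calc _ ≤ exp (1 / (4 * ε)) * (2 * (2 * √π * √ε)) := by gcongr
      _ = 4 * √π * √ε * exp (1 / (4 * ε)) := by ring
end

section
/- Let V(x) = x⁴/4 − x²/2, and for n ∈ ℕ let H ∈ C^{n+1}(ℝ) satisfy H^{(i)}(1) = H^{(i)}(−1) = 0 for 0 ≤ i ≤ n and the polynomial growth bound |H(x)| ≤ C₀(1 + |x|^q) for some C₀, q > 0. Then there exist ε₀ > 0 and C > 0 such that for all 0 < ε < ε₀: |∫_ℝ H(x) μ_ε(dx)| ≤ C ε^{(n+1)/2}, where μ_ε(dx) = Z_ε^{−1} e^{−V(x)/ε} dx. -/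
/-!
Subtracting the constant `1 / 4` from `V` leaves the Gibbs average unchanged and turns the
potential into `W x = (x ^ 2 - 1) ^ 2 / 4`, which vanishes exactly at `±1`. On `[-2, 2]`,
Taylor's theorem gives `|H x| ≤ M ||x| - 1| ^ (n + 1)` while `W x ≥ (|x| - 1) ^ 2 / 4`, so after
the substitution `u = √ε v` the two wells contribute `O(√ε ^ (n + 2))` to `∫ H e^{-W/ε}`.
Outside `[-2, 2]` we have `W ≥ 9 / 4`, so the polynomially growing tail carries a factor
`e^{-9/(8ε)}`, which beats every power of `ε`. Dividing by `∫ e^{-W/ε} ≥ e^{-9/4} √ε` (the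
integrand is at least `e^{-9/4}` on `[1, 1 + √ε]`) gives the bound.
-/

open Real MeasureTheory Set Metric

theorem exists_norm_le_mul_dist_pow_of_iteratedDeriv_eq_zero {𝕜 F : Type*} [RCLike 𝕜]
    [NormedAddCommGroup F] [NormedSpace 𝕜 F] (k : ℕ) {f : 𝕜 → F} {a : 𝕜} (hf : ContDiff 𝕜 k f)
    (hvan : ∀ i < k, iteratedDeriv i f a = 0) (r : ℝ) :
    ∃ M, 0 ≤ M ∧ ∀ x, dist x a ≤ r → ‖f x‖ ≤ M * dist x a ^ k := by
  induction k generalizing f with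
  | zero =>
    obtain ⟨M, hM⟩ :=
      (isCompact_closedBall a r).exists_bound_of_continuousOn hf.continuous.continuousOn
    refine ⟨max M 0, le_max_right _ _, fun x hx => ?_⟩
    rw [pow_zero, mul_one]
    exact (hM x hx).trans (le_max_left _ _)
  | succ k ih =>
    obtain ⟨hdiff, -, hderiv⟩ := (contDiff_succ_iff_deriv (n := k)).mp (by exact_mod_cast hf)
    obtain ⟨M, hM, hbound⟩ := ih hderiv fun i hi => by
      rw [← iteratedDeriv_succ']; exact hvan _ (by omega)
    refine ⟨M, hM, fun x hx => ?_⟩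
    have hfa : f a = 0 := by simpa using hvan 0 (by omega)
    have hmvt := (convex_closedBall a (dist x a)).norm_image_sub_le_of_norm_deriv_le
      (C := M * dist x a ^ k) (fun t _ => hdiff t)
      (fun t ht => (hbound t (ht.trans hx)).trans (by gcongr; exact mem_closedBall.1 ht))
      (mem_closedBall_self dist_nonneg) (mem_closedBall.2 le_rfl)
    rw [hfa, sub_zero, ← dist_eq_norm] at hmvt
    calc ‖f x‖ ≤ M * dist x a ^ k * dist x a := hmvt
      _ = M * dist x a ^ (k + 1) := by ring

theorem exists_abs_le_mul_abs_abs_sub_one_pow {H : ℝ → ℝ} {k : ℕ} (hH : ContDiff ℝ k H)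
    (hvan : ∀ i < k, iteratedDeriv i H 1 = 0 ∧ iteratedDeriv i H (-1) = 0) :
    ∃ M, 0 ≤ M ∧ ∀ x, |x| ≤ 2 → |H x| ≤ M * |(|x| - 1)| ^ k := by
  obtain ⟨M₁, hM₁, h₁⟩ := exists_norm_le_mul_dist_pow_of_iteratedDeriv_eq_zero k hH
    (fun i hi => (hvan i hi).1) 1
  obtain ⟨M₂, hM₂, h₂⟩ := exists_norm_le_mul_dist_pow_of_iteratedDeriv_eq_zero k hH
    (fun i hi => (hvan i hi).2) 1
  refine ⟨M₁ + M₂, by positivity, fun x hx => ?_⟩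
  have hx1 : |(|x| - 1)| ≤ 1 := abs_le.2 ⟨by linarith [abs_nonneg x], by linarith⟩
  rcases le_total 0 x with h0 | h0
  · have hd : dist x 1 = |(|x| - 1)| := by rw [Real.dist_eq, abs_of_nonneg h0]
    have := h₁ x (hd.trans_le hx1)
    rw [hd, Real.norm_eq_abs] at this
    exact this.trans (by gcongr; linarith)
  · have hd : dist x (-1) = |(|x| - 1)| := by
      rw [Real.dist_eq, abs_of_nonpos h0, sub_neg_eq_add, ← abs_neg]; ring_nf
    have := h₂ x (hd.trans_le hx1)
    rw [hd, Real.norm_eq_abs] at this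
    exact this.trans (by gcongr; linarith)

noncomputable def gibbsAverage (U : ℝ → ℝ) (ε : ℝ) (H : ℝ → ℝ) : ℝ :=
  (∫ y, exp (-U y / ε))⁻¹ * ∫ x, H x * exp (-U x / ε)

theorem gibbsAverage_add_const (U : ℝ → ℝ) (c ε : ℝ) (H : ℝ → ℝ) :
    gibbsAverage (fun x => U x + c) ε H = gibbsAverage U ε H := by
  have hsplit : ∀ x, exp (-(U x + c) / ε) = exp (-c / ε) * exp (-U x / ε) := fun x => by
    rw [← exp_add]; ring_nf
  simp only [gibbsAverage, hsplit, mul_left_comm (H _), integral_const_mul, mul_inv]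
  field_simp [exp_ne_zero]

noncomputable def doubleWell (x : ℝ) : ℝ := (x ^ 2 - 1) ^ 2 / 4

theorem sq_abs_sub_one_div_four_le_doubleWell (x : ℝ) : (|x| - 1) ^ 2 / 4 ≤ doubleWell x := by
  have hfactor : (x ^ 2 - 1) ^ 2 = (|x| - 1) ^ 2 * (|x| + 1) ^ 2 := by
    rw [← mul_pow, ← sq_abs x]; ring
  have hone : 1 ≤ (|x| + 1) ^ 2 := by nlinarith [abs_nonneg x]
  rw [doubleWell, hfactor]
  gcongr
  nlinarith [sq_nonneg (|x| - 1)]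

theorem nine_div_four_le_doubleWell {x : ℝ} (hx : 2 ≤ |x|) : 9 / 4 ≤ doubleWell x := by
  have hx2 : 4 ≤ x ^ 2 := by nlinarith [sq_abs x]
  rw [doubleWell]
  nlinarith

theorem doubleWell_le_of_mem_Icc {x : ℝ} (hx : x ∈ Icc (1 : ℝ) 2) :
    doubleWell x ≤ 9 / 4 * (x - 1) ^ 2 := by
  obtain ⟨h1, h2⟩ := hx
  have hfactor : (x ^ 2 - 1) ^ 2 = (x - 1) ^ 2 * (x + 1) ^ 2 := by ring
  have h9 : (x + 1) ^ 2 ≤ 9 := by nlinarith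
  rw [doubleWell, hfactor]
  nlinarith [mul_le_mul_of_nonneg_left h9 (sq_nonneg (x - 1))]

theorem exp_neg_doubleWell_div_le_gaussian {ε : ℝ} (hε : 0 < ε) (hε2 : ε ≤ 2) (x : ℝ) :
    exp (-doubleWell x / ε) ≤ exp (3 / 8) * exp (-(1 / 8) * x ^ 2) := by
  rw [← exp_add, exp_le_exp]
  have hW : 0 ≤ doubleWell x := by unfold doubleWell; positivity
  have hε' : doubleWell x / 2 ≤ doubleWell x / ε := div_le_div_of_nonneg_left hW hε hε2
  have hquartic : x ^ 2 / 8 - 3 / 8 ≤ doubleWell x / 2 := by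
    unfold doubleWell; nlinarith [sq_nonneg (x ^ 2 - 3 / 2)]
  rw [neg_div]
  linarith

theorem exp_neg_doubleWell_div_le_near {ε : ℝ} (hε : 0 < ε) (x : ℝ) :
    exp (-doubleWell x / ε) ≤ exp (-(|x| - 1) ^ 2 / (4 * ε)) := by
  rw [exp_le_exp, neg_div, neg_div, neg_le_neg_iff, ← div_div]
  exact div_le_div_of_nonneg_right (sq_abs_sub_one_div_four_le_doubleWell x) hε.le

theorem exp_neg_doubleWell_div_le_far {ε x : ℝ} (hε : 0 < ε) (hε1 : ε ≤ 1) (hx : 2 ≤ |x|) :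
    exp (-doubleWell x / ε) ≤ exp (-(9 / 8) / ε) * exp (-doubleWell x / 2) := by
  rw [← exp_add, exp_le_exp]
  have hW := nine_div_four_le_doubleWell hx
  have hhalf : doubleWell x / ε = doubleWell x / (2 * ε) + doubleWell x / (2 * ε) := by
    field_simp; ring
  have hdepth : (9 / 8) / ε ≤ doubleWell x / (2 * ε) := by
    rw [show (9 / 8 : ℝ) / ε = (9 / 4) / (2 * ε) by field_simp; norm_num]
    gcongr
  have hlarge : doubleWell x / 2 ≤ doubleWell x / (2 * ε) :=
    div_le_div_of_nonneg_left (by linarith) (by positivity) (by linarith)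
  simp only [neg_div]
  linarith

theorem integrable_abs_rpow_mul_exp_neg_mul_sq {b s : ℝ} (hb : 0 < b) (hs : -1 < s) :
    Integrable fun x : ℝ => |x| ^ s * exp (-b * x ^ 2) := by
  rw [← integrableOn_univ, ← Iio_union_Ici (a := (0 : ℝ)), integrableOn_union]
  constructor
  · refine (integrable_rpow_mul_exp_neg_mul_sq hb hs).comp_neg.integrableOn.congr_fun
      (fun x hx => ?_) measurableSet_Iio
    simp only [abs_of_neg (mem_Iio.1 hx), neg_sq]
  · refine (integrable_rpow_mul_exp_neg_mul_sq hb hs).integrableOn.congr_fun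
      (fun x hx => ?_) measurableSet_Ici
    simp only [abs_of_nonneg (mem_Ici.1 hx)]

theorem integrable_abs_pow_mul_exp_neg_sq_div (k : ℕ) {ε : ℝ} (hε : 0 < ε) :
    Integrable fun u : ℝ => |u| ^ k * exp (-u ^ 2 / (4 * ε)) := by
  refine (integrable_abs_rpow_mul_exp_neg_mul_sq (b := 1 / (4 * ε)) (by positivity)
    (s := k) (by linarith [k.cast_nonneg (α := ℝ)])).congr (ae_of_all _ fun u => ?_)
  simp only [rpow_natCast]
  congr 2
  ring

theorem integral_abs_pow_mul_exp_neg_sq_div (k : ℕ) {ε : ℝ} (hε : 0 < ε) :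
    ∫ u, |u| ^ k * exp (-u ^ 2 / (4 * ε)) =
      √ε ^ (k + 1) * ∫ v, |v| ^ k * exp (-v ^ 2 / 4) := by
  have hs : 0 < √ε := sqrt_pos.2 hε
  have hscale : ∀ u : ℝ, |u| ^ k * exp (-u ^ 2 / (4 * ε)) =
      √ε ^ k * (|u / √ε| ^ k * exp (-(u / √ε) ^ 2 / 4)) := fun u => by
    rw [abs_div, abs_of_pos hs, div_pow, div_pow, sq_sqrt hε.le, ← mul_assoc, ← mul_div_assoc,
      mul_div_cancel_left₀ _ (pow_ne_zero _ hs.ne')]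
    ring_nf
  simp_rw [hscale]
  rw [integral_const_mul, Measure.integral_comp_div (fun v => |v| ^ k * exp (-v ^ 2 / 4)),
    abs_of_pos hs, smul_eq_mul]
  ring

theorem abs_mul_exp_neg_doubleWell_le {H G : ℝ → ℝ} {k : ℕ} {M ε : ℝ} (hM : 0 ≤ M)
    (hnear : ∀ x, |x| ≤ 2 → |H x| ≤ M * |(|x| - 1)| ^ k) (hfar : ∀ x, |H x| ≤ G x)
    (hε : 0 < ε) (hε1 : ε ≤ 1) (x : ℝ) :
    |H x * exp (-doubleWell x / ε)| ≤
      M * (|x - 1| ^ k * exp (-(x - 1) ^ 2 / (4 * ε)) +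
          |x + 1| ^ k * exp (-(x + 1) ^ 2 / (4 * ε))) +
        exp (-(9 / 8) / ε) * (G x * exp (-doubleWell x / 2)) := by
  have hG : 0 ≤ G x := (abs_nonneg _).trans (hfar x)
  rw [abs_mul, abs_of_pos (exp_pos _)]
  rcases le_total |x| 2 with hx | hx
  · have hwell : |(|x| - 1)| ^ k * exp (-(|x| - 1) ^ 2 / (4 * ε)) ≤
        |x - 1| ^ k * exp (-(x - 1) ^ 2 / (4 * ε)) +
          |x + 1| ^ k * exp (-(x + 1) ^ 2 / (4 * ε)) := by
      rcases le_total 0 x with h0 | h0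
      · rw [abs_of_nonneg h0]
        exact le_add_of_nonneg_right (by positivity)
      · rw [abs_of_nonpos h0, show -x - 1 = -(x + 1) by ring, abs_neg, neg_sq]
        exact le_add_of_nonneg_left (by positivity)
    calc |H x| * exp (-doubleWell x / ε)
        ≤ M * |(|x| - 1)| ^ k * exp (-(|x| - 1) ^ 2 / (4 * ε)) :=
          mul_le_mul (hnear x hx) (exp_neg_doubleWell_div_le_near hε x) (exp_pos _).le
            (by positivity)
      _ ≤ _ := by
          rw [mul_assoc]
          exact le_add_of_le_of_nonneg (by gcongr) (by positivity)
  · calc |H x| * exp (-doubleWell x / ε)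
        ≤ G x * (exp (-(9 / 8) / ε) * exp (-doubleWell x / 2)) :=
          mul_le_mul (hfar x) (exp_neg_doubleWell_div_le_far hε hε1 hx) (exp_pos _).le hG
      _ ≤ _ := by
          rw [mul_left_comm]
          exact le_add_of_nonneg_left (by positivity)

theorem abs_integral_mul_exp_neg_doubleWell_le {H G : ℝ → ℝ} {k : ℕ} {M ε : ℝ} (hM : 0 ≤ M)
    (hnear : ∀ x, |x| ≤ 2 → |H x| ≤ M * |(|x| - 1)| ^ k) (hfar : ∀ x, |H x| ≤ G x)
    (hG : Integrable fun x => G x * exp (-doubleWell x / 2)) (hε : 0 < ε) (hε1 : ε ≤ 1) :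
    |∫ x, H x * exp (-doubleWell x / ε)| ≤
      2 * M * √ε ^ (k + 1) * (∫ v, |v| ^ k * exp (-v ^ 2 / 4)) +
        exp (-(9 / 8) / ε) * ∫ x, G x * exp (-doubleWell x / 2) := by
  have hg := integrable_abs_pow_mul_exp_neg_sq_div k hε
  have hg₁ := hg.comp_sub_right 1
  have hg₂ := hg.comp_add_right 1
  have hwells : Integrable fun x => M * (|x - 1| ^ k * exp (-(x - 1) ^ 2 / (4 * ε)) +
      |x + 1| ^ k * exp (-(x + 1) ^ 2 / (4 * ε))) := (hg₁.add hg₂).const_mul M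
  have htail : Integrable fun x => exp (-(9 / 8) / ε) * (G x * exp (-doubleWell x / 2)) :=
    hG.const_mul _
  calc |∫ x, H x * exp (-doubleWell x / ε)|
      ≤ ∫ x, |H x * exp (-doubleWell x / ε)| := abs_integral_le_integral_abs
    _ ≤ ∫ x, M * (|x - 1| ^ k * exp (-(x - 1) ^ 2 / (4 * ε)) +
            |x + 1| ^ k * exp (-(x + 1) ^ 2 / (4 * ε))) +
          exp (-(9 / 8) / ε) * (G x * exp (-doubleWell x / 2)) :=
        integral_mono_of_nonneg (ae_of_all _ fun x => abs_nonneg _) (hwells.add htail)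
          (ae_of_all _ (abs_mul_exp_neg_doubleWell_le hM hnear hfar hε hε1))
    _ = _ := by
        rw [integral_add hwells htail, integral_const_mul, integral_const_mul,
          integral_add hg₁ hg₂,
          integral_sub_right_eq_self (fun u => |u| ^ k * exp (-u ^ 2 / (4 * ε))),
          integral_add_right_eq_self (fun u => |u| ^ k * exp (-u ^ 2 / (4 * ε))),
          integral_abs_pow_mul_exp_neg_sq_div k hε]
        ring

theorem exp_neg_mul_sqrt_le_integral_exp_neg_doubleWell {ε : ℝ} (hε : 0 < ε) (hε1 : ε ≤ 1) :
    exp (-(9 / 4)) * √ε ≤ ∫ x, exp (-doubleWell x / ε) := by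
  have hint : Integrable fun x => exp (-doubleWell x / ε) :=
    ((integrable_exp_neg_mul_sq (by norm_num : (0 : ℝ) < 1 / 8)).const_mul (exp (3 / 8))).mono'
      (by unfold doubleWell; fun_prop) (ae_of_all _ fun x => by
        rw [norm_of_nonneg (exp_pos _).le]
        exact exp_neg_doubleWell_div_le_gaussian hε (by linarith) x)
  have hs : 0 ≤ √ε := sqrt_nonneg ε
  have hs1 : √ε ≤ 1 := sqrt_le_one.2 hε1
  have hbottom : ∀ x ∈ Icc 1 (1 + √ε), exp (-(9 / 4)) ≤ exp (-doubleWell x / ε) := by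
    intro x ⟨h1, h2⟩
    have hW := doubleWell_le_of_mem_Icc ⟨h1, by linarith⟩
    have hsq : (x - 1) ^ 2 ≤ ε := by nlinarith [sq_sqrt hε.le]
    rw [exp_le_exp, neg_div, neg_le_neg_iff, div_le_iff₀ hε]
    nlinarith
  calc exp (-(9 / 4)) * √ε = exp (-(9 / 4)) * volume.real (Icc 1 (1 + √ε)) := by
        rw [Real.volume_real_Icc_of_le (by linarith), add_sub_cancel_left]
    _ ≤ ∫ x in Icc 1 (1 + √ε), exp (-doubleWell x / ε) :=
        setIntegral_ge_of_const_le_real measurableSet_Icc (by simp) hbottom hint.integrableOn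
    _ ≤ ∫ x, exp (-doubleWell x / ε) :=
        setIntegral_le_integral hint (ae_of_all _ fun x => (exp_pos _).le)

theorem exp_neg_div_le_factorial_mul_sqrt_pow (k : ℕ) {a ε : ℝ} (ha : 1 ≤ a) (hε : 0 < ε)
    (hε1 : ε ≤ 1) : exp (-a / ε) ≤ k.factorial * √ε ^ k := by
  have hx : 0 < a / ε := by positivity
  have hs : 0 < √ε := sqrt_pos.2 hε
  have hexp : exp (-a / ε) * (a / ε) ^ k ≤ k.factorial := by
    have := pow_div_factorial_le_exp _ hx.le k
    rw [div_le_iff₀ (by positivity)] at this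
    rw [neg_div, exp_neg, inv_mul_le_iff₀ (exp_pos _)]
    exact this
  have hone : 1 ≤ √ε * (a / ε) := by
    rw [show √ε * (a / ε) = a / √ε by
      field_simp; rw [sq_sqrt hε.le]]
    exact ha.trans (le_div_self (by linarith) hs (sqrt_le_one.2 hε1))
  refine le_of_mul_le_mul_right ?_ (pow_pos hx k)
  calc exp (-a / ε) * (a / ε) ^ k ≤ k.factorial * 1 := by rw [mul_one]; exact hexp
    _ ≤ k.factorial * (√ε * (a / ε)) ^ k := by gcongr; exact one_le_pow₀ hone
    _ = k.factorial * √ε ^ k * (a / ε) ^ k := by ring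

theorem integrable_one_add_abs_rpow_mul_exp_neg_doubleWell {q : ℝ} (hq : -1 < q) :
    Integrable fun x => (1 + |x| ^ q) * exp (-doubleWell x / 2) := by
  have hb : (0 : ℝ) < 1 / 8 := by norm_num
  have hgauss := (integrable_exp_neg_mul_sq hb).add (integrable_abs_rpow_mul_exp_neg_mul_sq hb hq)
  refine (hgauss.const_mul (exp (3 / 8))).mono' (by unfold doubleWell; fun_prop)
    (ae_of_all _ fun x => ?_)
  rw [norm_of_nonneg (by positivity)]
  calc (1 + |x| ^ q) * exp (-doubleWell x / 2)
      ≤ (1 + |x| ^ q) * (exp (3 / 8) * exp (-(1 / 8) * x ^ 2)) := by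
        gcongr; exact exp_neg_doubleWell_div_le_gaussian two_pos le_rfl x
    _ = _ := by simp only [Pi.add_apply]; ring

theorem exists_abs_gibbsAverage_doubleWell_le {H : ℝ → ℝ} {k : ℕ} (hH : ContDiff ℝ k H)
    (hvan : ∀ i < k, iteratedDeriv i H 1 = 0 ∧ iteratedDeriv i H (-1) = 0) {C₀ q : ℝ}
    (hq : -1 < q) (hgrowth : ∀ x, |H x| ≤ C₀ * (1 + |x| ^ q)) :
    ∃ C, ∀ ε, 0 < ε → ε ≤ 1 → |gibbsAverage doubleWell ε H| ≤ C * √ε ^ k := by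
  obtain ⟨M, hM, hnear⟩ := exists_abs_le_mul_abs_abs_sub_one_pow hH hvan
  have hG : Integrable fun x => C₀ * (1 + |x| ^ q) * exp (-doubleWell x / 2) := by
    simpa only [mul_assoc] using
      (integrable_one_add_abs_rpow_mul_exp_neg_doubleWell hq).const_mul C₀
  set m := ∫ v, |v| ^ k * exp (-v ^ 2 / 4)
  set J := ∫ x, C₀ * (1 + |x| ^ q) * exp (-doubleWell x / 2)
  set B := 2 * M * m + (k + 1).factorial * J
  refine ⟨exp (9 / 4) * B, fun ε hε hε1 => ?_⟩
  have hJ : 0 ≤ J := integral_nonneg fun x =>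
    mul_nonneg ((abs_nonneg _).trans (hgrowth x)) (exp_pos _).le
  have hD := exp_neg_mul_sqrt_le_integral_exp_neg_doubleWell hε hε1
  have hDpos : 0 < ∫ x, exp (-doubleWell x / ε) := lt_of_lt_of_le (by positivity) hD
  have hN : |∫ x, H x * exp (-doubleWell x / ε)| ≤ B * √ε ^ (k + 1) :=
    calc _ ≤ 2 * M * √ε ^ (k + 1) * m + exp (-(9 / 8) / ε) * J :=
          abs_integral_mul_exp_neg_doubleWell_le hM hnear hgrowth hG hε hε1
      _ ≤ 2 * M * √ε ^ (k + 1) * m + (k + 1).factorial * √ε ^ (k + 1) * J := by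
          gcongr; exact exp_neg_div_le_factorial_mul_sqrt_pow (k + 1) (by norm_num) hε hε1
      _ = B * √ε ^ (k + 1) := by ring
  calc |gibbsAverage doubleWell ε H|
      = |∫ x, H x * exp (-doubleWell x / ε)| / ∫ x, exp (-doubleWell x / ε) := by
        rw [gibbsAverage, abs_mul, abs_inv, abs_of_pos hDpos, inv_mul_eq_div]
    _ ≤ B * √ε ^ (k + 1) / (exp (-(9 / 4)) * √ε) :=
        div_le_div₀ (by positivity) hN (by positivity) hD
    _ = exp (9 / 4) * B * √ε ^ k := by
        rw [exp_neg]; field_simp; ring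

theorem stmt16_general (V : ℝ → ℝ) (hV : ∀ x : ℝ, V x = x ^ 4 / 4 - x ^ 2 / 2)
    (n : ℕ) (H : ℝ → ℝ) (hH : ContDiff ℝ (n + 1) H)
    (hvan : ∀ i ≤ n, iteratedDeriv i H 1 = 0 ∧ iteratedDeriv i H (-1) = 0)
    (C₀ q : ℝ) (hq : 0 < q)
    (hgrowth : ∀ x : ℝ, |H x| ≤ C₀ * (1 + |x| ^ q)) :
    ∃ ε₀ C : ℝ, 0 < ε₀ ∧ 0 < C ∧ ∀ ε : ℝ, 0 < ε → ε < ε₀ →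
      |(∫ y : ℝ, Real.exp (-(V y) / ε))⁻¹ * ∫ x : ℝ, H x * Real.exp (-(V x) / ε)|
        ≤ C * ε ^ (((n : ℝ) + 1) / 2) := by
  obtain ⟨C, hC⟩ := exists_abs_gibbsAverage_doubleWell_le (k := n + 1) (by exact_mod_cast hH)
    (fun i hi => hvan i (by omega)) (by linarith) hgrowth
  have hVW : V = fun x => doubleWell x + -(1 / 4) := funext fun x => by
    rw [hV, doubleWell]; ring
  refine ⟨1, max C 1, one_pos, by positivity, fun ε hε hε1 => ?_⟩
  have hpow : ε ^ (((n : ℝ) + 1) / 2) = √ε ^ (n + 1) := by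
    rw [sqrt_eq_rpow, ← rpow_natCast, ← rpow_mul hε.le]; push_cast; ring_nf
  change |gibbsAverage V ε H| ≤ _
  rw [hVW, gibbsAverage_add_const, hpow]
  exact (hC ε hε hε1.le).trans (by gcongr; exact le_max_left _ _)

/-- observables vanishing to order n+1 at both minima ±1 have
equilibrium averages of order O(ε^{(n+1)/2}). -/
theorem stmt16 (V : ℝ → ℝ) (hV : ∀ x : ℝ, V x = x ^ 4 / 4 - x ^ 2 / 2)
    (n : ℕ) (H : ℝ → ℝ) (hH : ContDiff ℝ (n + 1) H)
    (hvan : ∀ i ≤ n, iteratedDeriv i H 1 = 0 ∧ iteratedDeriv i H (-1) = 0)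
    (C₀ q : ℝ) (hC₀ : 0 < C₀) (hq : 0 < q)
    (hgrowth : ∀ x : ℝ, |H x| ≤ C₀ * (1 + |x| ^ q)) :
    ∃ ε₀ C : ℝ, 0 < ε₀ ∧ 0 < C ∧ ∀ ε : ℝ, 0 < ε → ε < ε₀ →
      |(∫ y : ℝ, Real.exp (-(V y) / ε))⁻¹ * ∫ x : ℝ, H x * Real.exp (-(V x) / ε)|
        ≤ C * ε ^ (((n : ℝ) + 1) / 2) :=
  stmt16_general V hV n H hH hvan C₀ q hq hgrowth
end

section
/- Let f : [0,∞) → ℝ be continuous with |f(s) − L| ≤ K e^{−s} for all s ≥ 0, for some constants L ∈ ℝ and K > 0, and let i ≥ 1 be an integer. Let Λ(t) = e^{2t} θ(t) where θ : [0,∞) → ℝ is continuous with 0 < c ≤ θ(t) ≤ C for all t and |θ(t) − θ_∞| ≤ C e^{−2t} for some θ_∞ > 0. Then there exists a constant C' > 0 such that |Λ(t)^{−i} ∫₀ᵗ Λ(s)^i f(s) ds − L/(2i)| ≤ C' e^{−t} for all t ≥ 0. -/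
/-!
Call `u` exponentially convergent to `a` if `|u t - a| ≤ A e^{-t}` on `[0, ∞)`. This is stable
under products, powers and inverses of functions bounded away from `0`, and for `k > 1` the
average `e^{-kt} ∫₀ᵗ e^{ks} g(s) ds` of a function `g` converging exponentially to `a` converges
exponentially to `a / k`: the error `∫₀ᵗ e^{ks} O(e^{-s}) ds = O(e^{(k-1)t})` is still `O(e^{-t})`
after division by `e^{kt}`. Since `Λ(s)^i = e^{2is} θ(s)^i`, the quantity of the theorem is
`θ(t)^{-i}` times such an average of `θ^i f` with `k = 2i`.
-/

open Real

def ExpConvergesTo (u : ℝ → ℝ) (a : ℝ) : Prop :=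
  ∃ A : ℝ, ∀ t : ℝ, 0 ≤ t → |u t - a| ≤ A * exp (-t)

namespace ExpConvergesTo

variable {u v : ℝ → ℝ} {a b : ℝ}

theorem const (a : ℝ) : ExpConvergesTo (fun _ => a) a :=
  ⟨0, fun t _ => by simp⟩

theorem exists_abs_le (hu : ExpConvergesTo u a) : ∃ U : ℝ, ∀ t : ℝ, 0 ≤ t → |u t| ≤ U := by
  obtain ⟨A, hA⟩ := hu
  refine ⟨|a| + |A|, fun t ht => ?_⟩
  have hexp : exp (-t) ≤ 1 := exp_le_one_iff.mpr (by linarith)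
  calc |u t| ≤ |a| + |u t - a| := by simpa using abs_add_le a (u t - a)
    _ ≤ |a| + |A| * exp (-t) := by
        gcongr; exact (hA t ht).trans (by gcongr; exact le_abs_self A)
    _ ≤ |a| + |A| := by gcongr; exact mul_le_of_le_one_right (abs_nonneg A) hexp

theorem mul (hu : ExpConvergesTo u a) (hv : ExpConvergesTo v b) :
    ExpConvergesTo (u * v) (a * b) := by
  obtain ⟨U, hU⟩ := hu.exists_abs_le
  obtain ⟨A, hA⟩ := hu
  obtain ⟨B, hB⟩ := hv
  refine ⟨U * B + A * |b|, fun t ht => ?_⟩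
  have hU0 : 0 ≤ U := (abs_nonneg _).trans (hU t ht)
  calc |u t * v t - a * b| = |u t * (v t - b) + (u t - a) * b| := by congr 1; ring
    _ ≤ |u t| * |v t - b| + |u t - a| * |b| := by
        simpa only [abs_mul] using abs_add_le (u t * (v t - b)) ((u t - a) * b)
    _ ≤ U * (B * exp (-t)) + A * exp (-t) * |b| := by
        gcongr
        exacts [hU t ht, hB t ht, hA t ht]
    _ = (U * B + A * |b|) * exp (-t) := by ring

theorem pow (hu : ExpConvergesTo u a) (n : ℕ) : ExpConvergesTo (u ^ n) (a ^ n) := by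
  induction n with
  | zero => exact const 1
  | succ n ih => simpa only [pow_succ] using ih.mul hu

theorem inv (hu : ExpConvergesTo u a) (ha : a ≠ 0) {c : ℝ} (hc : 0 < c)
    (hcu : ∀ t : ℝ, 0 ≤ t → c ≤ |u t|) : ExpConvergesTo u⁻¹ a⁻¹ := by
  obtain ⟨A, hA⟩ := hu
  refine ⟨A / (c * |a|), fun t ht => ?_⟩
  have hut : u t ≠ 0 := abs_pos.mp (hc.trans_le (hcu t ht))
  calc |(u t)⁻¹ - a⁻¹| = |u t - a| / (|u t| * |a|) := by
        rw [inv_sub_inv hut ha, abs_div, abs_mul, abs_sub_comm]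
    _ ≤ A * exp (-t) / (c * |a|) := by
        gcongr
        exacts [(abs_nonneg _).trans (hA t ht), hA t ht, hcu t ht]
    _ = A / (c * |a|) * exp (-t) := by ring

theorem exists_pos (hu : ExpConvergesTo u a) :
    ∃ C : ℝ, 0 < C ∧ ∀ t : ℝ, 0 ≤ t → |u t - a| ≤ C * exp (-t) := by
  obtain ⟨A, hA⟩ := hu
  exact ⟨max A 1, by positivity, fun t ht => (hA t ht).trans (by gcongr; exact le_max_left A 1)⟩

end ExpConvergesTo

theorem integral_exp_mul {a b c : ℝ} (hc : c ≠ 0) :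
    ∫ x in a..b, exp (c * x) = (exp (c * b) - exp (c * a)) / c := by
  rw [intervalIntegral.integral_comp_mul_left (fun x => exp x) hc, integral_exp, smul_eq_mul,
    inv_mul_eq_div]

theorem abs_integral_exp_mul_sub_le {g : ℝ → ℝ} {a A k t : ℝ}
    (hA : ∀ s : ℝ, 0 ≤ s → |g s - a| ≤ A * exp (-s)) (hk : 1 < k) (ht : 0 ≤ t) :
    |∫ s in (0 : ℝ)..t, exp (k * s) * (g s - a)| ≤ A / (k - 1) * exp ((k - 1) * t) := by
  have hA0 : 0 ≤ A := by simpa using (abs_nonneg _).trans (hA 0 le_rfl)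
  have hk1 : 0 < k - 1 := sub_pos.mpr hk
  have hbound : ∀ s ∈ Set.Ioc 0 t, ‖exp (k * s) * (g s - a)‖ ≤ A * exp ((k - 1) * s) := by
    intro s hs
    rw [Real.norm_eq_abs, abs_mul, abs_exp]
    calc exp (k * s) * |g s - a| ≤ exp (k * s) * (A * exp (-s)) := by
          gcongr; exact hA s hs.1.le
      _ = A * exp ((k - 1) * s) := by rw [mul_left_comm, ← exp_add]; ring_nf
  have hle := intervalIntegral.norm_integral_le_of_norm_le (μ := MeasureTheory.volume) ht
    (Filter.Eventually.of_forall fun s => hbound s)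
    ((continuous_const.mul (by fun_prop)).intervalIntegrable 0 t)
  rw [intervalIntegral.integral_const_mul, integral_exp_mul hk1.ne', mul_zero, exp_zero] at hle
  calc |∫ s in (0 : ℝ)..t, exp (k * s) * (g s - a)|
      ≤ A * ((exp ((k - 1) * t) - 1) / (k - 1)) := hle
    _ ≤ A / (k - 1) * exp ((k - 1) * t) := by
      rw [mul_div_assoc', div_mul_eq_mul_div]
      gcongr
      linarith

theorem ExpConvergesTo.exp_mul_integral {g : ℝ → ℝ} {a k : ℝ} (hg : ExpConvergesTo g a)
    (hgc : ContinuousOn g (Set.Ici 0)) (hk : 1 < k) :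
    ExpConvergesTo (fun t => (exp (k * t))⁻¹ * ∫ s in (0 : ℝ)..t, exp (k * s) * g s) (a / k) := by
  obtain ⟨A, hA⟩ := hg
  have hk0 : 0 < k := one_pos.trans hk
  refine ⟨A / (k - 1) + |a| / k, fun t ht => ?_⟩
  have hexp_cont : Continuous fun s => exp (k * s) := by fun_prop
  set R := ∫ s in (0 : ℝ)..t, exp (k * s) * (g s - a)
  have hsplit :
      ∫ s in (0 : ℝ)..t, exp (k * s) * g s = R + a * ∫ s in (0 : ℝ)..t, exp (k * s) := by
    have hint : IntervalIntegrable (fun s => exp (k * s) * (g s - a)) MeasureTheory.volume 0 t :=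
      ((hexp_cont.continuousOn.mul (hgc.sub continuousOn_const)).mono
        (by simp [Set.uIcc_of_le ht, Set.Icc_subset_Ici_self])).intervalIntegrable
    rw [← intervalIntegral.integral_const_mul,
      ← intervalIntegral.integral_add hint ((hexp_cont.const_mul a).intervalIntegrable 0 t)]
    congr 1 with s
    ring
  rw [integral_exp_mul hk0.ne', mul_zero, exp_zero] at hsplit
  have hR : |R| * exp (-(k * t)) ≤ A / (k - 1) * exp (-t) :=
    calc |R| * exp (-(k * t)) ≤ A / (k - 1) * exp ((k - 1) * t) * exp (-(k * t)) := by
          gcongr; exact abs_integral_exp_mul_sub_le hA hk ht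
      _ = A / (k - 1) * exp (-t) := by rw [mul_assoc, ← exp_add]; ring_nf
  have hdecay : exp (-(k * t)) ≤ exp (-t) := by gcongr; nlinarith
  calc |(exp (k * t))⁻¹ * (∫ s in (0 : ℝ)..t, exp (k * s) * g s) - a / k|
      = |R * exp (-(k * t)) - a / k * exp (-(k * t))| := by
        rw [hsplit, exp_neg]; congr 1; field_simp; ring
    _ ≤ |R| * exp (-(k * t)) + |a| / k * exp (-(k * t)) := by
        simpa [abs_mul, abs_div, abs_of_pos hk0] using
          abs_sub (R * exp (-(k * t))) (a / k * exp (-(k * t)))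
    _ ≤ (A / (k - 1) + |a| / k) * exp (-t) := by
        rw [add_mul]; gcongr

theorem stmt19_general (f θ : ℝ → ℝ) (L K θinf c C : ℝ)
    (hf : ContinuousOn f (Set.Ici (0:ℝ)))
    (hfL : ∀ s : ℝ, 0 ≤ s → |f s - L| ≤ K * Real.exp (-s))
    (i : ℕ) (hi : 1 ≤ i)
    (hθcont : ContinuousOn θ (Set.Ici (0:ℝ)))
    (hc : 0 < c)
    (hθbdd : ∀ t : ℝ, 0 ≤ t → c ≤ θ t ∧ θ t ≤ C)
    (hθinf : 0 < θinf)
    (hθrate : ∀ t : ℝ, 0 ≤ t → |θ t - θinf| ≤ C * Real.exp (-2 * t)) :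
    ∃ C' : ℝ, 0 < C' ∧ ∀ t : ℝ, 0 ≤ t →
      |((Real.exp (2 * t) * θ t) ^ i)⁻¹ *
          (∫ s in (0:ℝ)..t, (Real.exp (2 * s) * θ s) ^ i * f s) - L / (2 * i)|
        ≤ C' * Real.exp (-t) := by
  have hC : 0 ≤ C := hc.le.trans ((hθbdd 0 le_rfl).1.trans (hθbdd 0 le_rfl).2)
  have hθ : ExpConvergesTo θ θinf :=
    ⟨C, fun t ht => (hθrate t ht).trans (by gcongr; linarith)⟩
  have hθi : ExpConvergesTo (θ ^ i) (θinf ^ i) := hθ.pow i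
  have hk : (1 : ℝ) < 2 * i := by
    have : (1 : ℝ) ≤ i := by exact_mod_cast hi
    linarith
  have hmean := (hθi.mul ⟨K, hfL⟩).exp_mul_integral ((hθcont.pow i).mul hf) hk
  have hθi_inv := hθi.inv (pow_ne_zero i hθinf.ne') (pow_pos hc i)
    fun t ht => (pow_le_pow_left₀ hc.le (hθbdd t ht).1 i).trans (le_abs_self _)
  obtain ⟨C', hC', hbound⟩ := (hθi_inv.mul hmean).exists_pos
  refine ⟨C', hC', fun t ht => ?_⟩
  have hΛ : ∀ s : ℝ, (exp (2 * s) * θ s) ^ i = exp (2 * i * s) * θ s ^ i := fun s => by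
    rw [mul_pow, ← exp_nat_mul]; ring_nf
  convert hbound t ht using 3
  · simp only [hΛ, Pi.mul_apply, Pi.pow_apply, Pi.inv_apply, mul_inv, mul_assoc]
    ring_nf
  · field_simp

/-- abstract kernel estimate — exponentially converging integrands
averaged against powers of Λ(t) = e^{2t} θ(t) converge exponentially to L/(2i). -/
theorem stmt19 (f θ : ℝ → ℝ) (L K θinf c C : ℝ) (hK : 0 < K)
    (hf : ContinuousOn f (Set.Ici (0:ℝ)))
    (hfL : ∀ s : ℝ, 0 ≤ s → |f s - L| ≤ K * Real.exp (-s))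
    (i : ℕ) (hi : 1 ≤ i)
    (hθcont : ContinuousOn θ (Set.Ici (0:ℝ)))
    (hc : 0 < c)
    (hθbdd : ∀ t : ℝ, 0 ≤ t → c ≤ θ t ∧ θ t ≤ C)
    (hθinf : 0 < θinf)
    (hθrate : ∀ t : ℝ, 0 ≤ t → |θ t - θinf| ≤ C * Real.exp (-2 * t)) :
    ∃ C' : ℝ, 0 < C' ∧ ∀ t : ℝ, 0 ≤ t →
      |((Real.exp (2 * t) * θ t) ^ i)⁻¹ *
          (∫ s in (0:ℝ)..t, (Real.exp (2 * s) * θ s) ^ i * f s) - L / (2 * i)|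
        ≤ C' * Real.exp (-t) :=
  stmt19_general f θ L K θinf c C hf hfL i hi hθcont hc hθbdd hθinf hθrate
end
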